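/- arXiv:math/0402087 — 10 statements merged into one kernel-verified Lean document; each statement's English description precedes it below -/
import Mathlib

section
/- For all nonzero complex numbers a₁,…,a₆ and every complex number z, the identity Φ(z) − Ψ(z) = z·(q₂ z² + q₁ z + q₀) holds, where Φ(z) := (1 + z a₁a₂a₃)(1 + z a₁a₅a₆)(1 + z a₂a₄a₆)(1 + z a₃a₄a₅) and Ψ(z) := (1 − z)(1 − z a₁a₂a₄a₅)(1 − z a₁a₃a₄a₆)(1 − z a₂a₃a₅a₆). -/
noncomputable def q0 (a1 a2 a3 a4 a5 a6 : ℂ) : ℂ :=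
  1 + a1*a2*a3 + a1*a5*a6 + a2*a4*a6 + a3*a4*a5
    + a1*a2*a4*a5 + a1*a3*a4*a6 + a2*a3*a5*a6

noncomputable def q1 (a1 a2 a3 a4 a5 a6 : ℂ) : ℂ :=
  -(a1*a2*a3*a4*a5*a6) *
    ((a1 - a1⁻¹)*(a4 - a4⁻¹) + (a2 - a2⁻¹)*(a5 - a5⁻¹) + (a3 - a3⁻¹)*(a6 - a6⁻¹))

noncomputable def q2 (a1 a2 a3 a4 a5 a6 : ℂ) : ℂ :=
  a1*a2*a3*a4*a5*a6 *
    (a1*a4 + a2*a5 + a3*a6 + a1*a2*a6 + a1*a3*a5 + a2*a3*a4 + a4*a5*a6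
      + a1*a2*a3*a4*a5*a6)

theorem stmt0 (a1 a2 a3 a4 a5 a6 z : ℂ)
    (h1 : a1 ≠ 0) (h2 : a2 ≠ 0) (h3 : a3 ≠ 0)
    (h4 : a4 ≠ 0) (h5 : a5 ≠ 0) (h6 : a6 ≠ 0) :
    (1 + z*a1*a2*a3) * (1 + z*a1*a5*a6) * (1 + z*a2*a4*a6) * (1 + z*a3*a4*a5)
      - (1 - z) * (1 - z*a1*a2*a4*a5) * (1 - z*a1*a3*a4*a6) * (1 - z*a2*a3*a5*a6)
      = z * (q2 a1 a2 a3 a4 a5 a6 * z^2 + q1 a1 a2 a3 a4 a5 a6 * z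
          + q0 a1 a2 a3 a4 a5 a6) := by
  simp only [q0, q1, q2]
  field_simp
  ring
end

section
/- For all nonzero complex numbers a₁,…,a₆, the discriminant identity q₁² − 4 q₀ q₂ = 16 (a₁a₂a₃a₄a₅a₆)² · det G(a) holds, where G(a) is the 4×4 complex symmetric matrix with diagonal entries 1 and off-diagonal entries G₁₂ = b₁, G₁₃ = b₂, G₁₄ = b₆, G₂₃ = b₃, G₂₄ = b₅, G₃₄ = b₄, with b_k := −(a_k + a_k⁻¹)/2 for k = 1,…,6. -/
/-- The 4×4 symmetric Gram-type matrix with diagonal 1 and prescribed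
off-diagonal entries `G₁₂ = b1`, `G₁₃ = b2`, `G₁₄ = b6`, `G₂₃ = b3`,
`G₂₄ = b5`, `G₃₄ = b4`. -/
noncomputable def GramC (b1 b2 b3 b4 b5 b6 : ℂ) : Matrix (Fin 4) (Fin 4) ℂ :=
  !![1, b1, b2, b6;
     b1, 1, b3, b5;
     b2, b3, 1, b4;
     b6, b5, b4, 1]

set_option maxHeartbeats 4000000 in
theorem stmt1 (a1 a2 a3 a4 a5 a6 : ℂ)
    (h1 : a1 ≠ 0) (h2 : a2 ≠ 0) (h3 : a3 ≠ 0)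
    (h4 : a4 ≠ 0) (h5 : a5 ≠ 0) (h6 : a6 ≠ 0) :
    (q1 a1 a2 a3 a4 a5 a6)^2 - 4 * q0 a1 a2 a3 a4 a5 a6 * q2 a1 a2 a3 a4 a5 a6
      = 16 * (a1*a2*a3*a4*a5*a6)^2 *
        (GramC (-(a1 + a1⁻¹)/2) (-(a2 + a2⁻¹)/2) (-(a3 + a3⁻¹)/2)
               (-(a4 + a4⁻¹)/2) (-(a5 + a5⁻¹)/2) (-(a6 + a6⁻¹)/2)).det := by
  have hdet : ∀ b1 b2 b3 b4 b5 b6 : ℂ, (GramC b1 b2 b3 b4 b5 b6).det =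
      1 - b1^2 - b2^2 - b3^2 - b4^2 - b5^2 - b6^2
      + b1^2*b4^2 + b2^2*b5^2 + b3^2*b6^2
      + 2*(b1*b2*b3 + b1*b5*b6 + b2*b4*b6 + b3*b4*b5)
      - 2*(b1*b2*b4*b5 + b1*b3*b4*b6 + b2*b3*b5*b6) := by
    intro b1 b2 b3 b4 b5 b6
    simp [GramC, Matrix.det_succ_row_zero, Fin.sum_univ_succ, Fin.succAbove,
      Fin.castSucc, Fin.castAdd, Fin.castLE]
    ring
  have e1 : a1 * a1⁻¹ = 1 := mul_inv_cancel₀ h1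
  have e2 : a2 * a2⁻¹ = 1 := mul_inv_cancel₀ h2
  have e3 : a3 * a3⁻¹ = 1 := mul_inv_cancel₀ h3
  have e4 : a4 * a4⁻¹ = 1 := mul_inv_cancel₀ h4
  have e5 : a5 * a5⁻¹ = 1 := mul_inv_cancel₀ h5
  have e6 : a6 * a6⁻¹ = 1 := mul_inv_cancel₀ h6
  rw [hdet]
  simp only [q0, q1, q2]
  linear_combination ((4*a2^2*a3^2*a4^2*a5^2*a6^2 + -4*a2^2*a3^2*a4^3*a5^2*a6^2*a4⁻¹ + 4*a1*a2^2*a3^2*a4^2*a5^2*a6^2*a5⁻¹*a6⁻¹ + 4*a1*a2^2*a3^2*a4^2*a5^2*a6^2*a3⁻¹*a4⁻¹*a6⁻¹ + 4*a1*a2^2*a3^2*a4^2*a5^2*a6^2*a2⁻¹*a4⁻¹*a5⁻¹ + 4*a1*a2^2*a3^2*a4^2*a5^2*a6^2*a2⁻¹*a3⁻¹ + 4*a1*a2^2*a3^2*a4^2*a5^2*a6^2*a1⁻¹ + 4*a1*a2^2*a3^2*a4^2*a5^2*a6^3*a5⁻¹ + 4*a1*a2^2*a3^2*a4^2*a5^3*a6^2*a6⁻¹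 + 4*a1*a2^2*a3^2*a4^2*a5^3*a6^3 + -4*a1*a2^2*a3^2*a4^3*a5^2*a6^2*a1⁻¹*a4⁻¹ + 4*a1*a2^2*a3^2*a4^3*a5^2*a6^3*a3⁻¹ + 4*a1*a2^2*a3^2*a4^3*a5^3*a6^2*a2⁻¹ + 4*a1*a2^2*a3^3*a4^2*a5^2*a6^2*a2⁻¹ + 4*a1*a2^2*a3^3*a4^2*a5^2*a6^3*a4⁻¹ + 4*a1*a2^2*a3^3*a4^3*a5^2*a6^2*a6⁻¹ + 4*a1*a2^3*a3^2*a4^2*a5^2*a6^2*a3⁻¹ + 4*a1*a2^3*a3^2*a4^2*a5^3*a6^2*a4⁻¹ + 4*a1*a2^3*a3^2*a4^3*a5^2*a6^2*a5⁻¹ + 4*a1*a2^3*a3^3*a4^2*a5^2*a6^2 + 8*a1^2*a2^2*a3^2*a4^2*a5^2*a6^2 + -4*a1^2*a2^2*a3^2*a4^2*a5^2*a6^2*a4⁻¹^2 + -4*a1^2*a2^2*a3^2*a4^4*a5^2*a6^2)) * e1 + ((4*a1*a2*a3^2*a4^2*a5^2*a6^2*a4⁻¹*a5⁻¹ + 4*a1*a2*a3^2*a4^2*a5^2*a6^2*a3⁻¹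 + 4*a1*a2*a3^2*a4^3*a5^3*a6^2 + 4*a1*a2*a3^3*a4^2*a5^2*a6^2 + 4*a1^2*a3^2*a4^2*a5^2*a6^2 + -4*a1^2*a3^2*a4^2*a5^3*a6^2*a5⁻¹ + 4*a1^2*a2*a3^2*a4^2*a5^2*a6^2*a4⁻¹*a6⁻¹ + 4*a1^2*a2*a3^2*a4^2*a5^2*a6^2*a3⁻¹*a5⁻¹*a6⁻¹ + 4*a1^2*a2*a3^2*a4^2*a5^2*a6^2*a2⁻¹ + 4*a1^2*a2*a3^2*a4^2*a5^2*a6^3*a4⁻¹ + -4*a1^2*a2*a3^2*a4^2*a5^3*a6^2*a2⁻¹*a5⁻¹ + 4*a1^2*a2*a3^2*a4^2*a5^3*a6^3*a3⁻¹ + 4*a1^2*a2*a3^2*a4^3*a5^2*a6^2*a6⁻¹ + 4*a1^2*a2*a3^2*a4^3*a5^2*a6^3 + 4*a1^2*a2*a3^3*a4^2*a5^2*a6^3*a5⁻¹ + 4*a1^2*a2*a3^3*a4^2*a5^3*a6^2*a6⁻¹ + 8*a1^2*a2^2*a3^2*a4^2*a5^2*a6^2 + -4*a1^2*a2^2*a3^2*a4^2*a5^2*a6^2*a5⁻¹^2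 + -4*a1^2*a2^2*a3^2*a4^2*a5^4*a6^2 + 4*a1^3*a2*a3^2*a4^2*a5^2*a6^2*a3⁻¹ + 4*a1^3*a2*a3^2*a4^2*a5^3*a6^2*a4⁻¹ + 4*a1^3*a2*a3^2*a4^3*a5^2*a6^2*a5⁻¹ + 4*a1^3*a2*a3^3*a4^2*a5^2*a6^2)) * e2 + ((4*a1*a2*a3*a4^2*a5^2*a6^2 + 4*a1*a2^2*a3*a4^2*a5^2*a6^2*a4⁻¹*a6⁻¹ + 4*a1*a2^2*a3*a4^3*a5^2*a6^3 + 4*a1*a2^3*a3*a4^2*a5^2*a6^2 + 4*a1^2*a2*a3*a4^2*a5^2*a6^2*a5⁻¹*a6⁻¹ + 4*a1^2*a2*a3*a4^2*a5^3*a6^3 + 4*a1^2*a2^2*a4^2*a5^2*a6^2 + -4*a1^2*a2^2*a4^2*a5^2*a6^3*a6⁻¹ + 4*a1^2*a2^2*a3*a4^2*a5^2*a6^2*a4⁻¹*a5⁻¹ + 4*a1^2*a2^2*a3*a4^2*a5^2*a6^2*a3⁻¹ + -4*a1^2*a2^2*a3*a4^2*a5^2*a6^3*a3⁻¹*a6⁻¹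 + 4*a1^2*a2^2*a3*a4^2*a5^3*a6^2*a4⁻¹ + 4*a1^2*a2^2*a3*a4^3*a5^2*a6^2*a5⁻¹ + 4*a1^2*a2^2*a3*a4^3*a5^3*a6^2 + 8*a1^2*a2^2*a3^2*a4^2*a5^2*a6^2 + -4*a1^2*a2^2*a3^2*a4^2*a5^2*a6^2*a6⁻¹^2 + -4*a1^2*a2^2*a3^2*a4^2*a5^2*a6^4 + 4*a1^2*a2^3*a3*a4^2*a5^2*a6^3*a5⁻¹ + 4*a1^2*a2^3*a3*a4^2*a5^3*a6^2*a6⁻¹ + 4*a1^3*a2*a3*a4^2*a5^2*a6^2 + 4*a1^3*a2^2*a3*a4^2*a5^2*a6^3*a4⁻¹ + 4*a1^3*a2^2*a3*a4^3*a5^2*a6^2*a6⁻¹ + 4*a1^3*a2^3*a3*a4^2*a5^2*a6^2)) * e3 + ((-4*a2^2*a3^2*a4^2*a5^2*a6^2 + 4*a1*a2*a3^2*a4*a5^2*a6^2*a5⁻¹ + 4*a1*a2^2*a3*a4*a5^2*a6^2*a6⁻¹ + 4*a1*a2^2*a3^3*a4*a5^2*a6^3 + 4*a1*a2^3*a3^2*a4*a5^3*a6^2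 + 4*a1^2*a2*a3^2*a4*a5^2*a6^2*a6⁻¹ + 4*a1^2*a2*a3^2*a4*a5^2*a6^3 + 4*a1^2*a2^2*a3*a4*a5^2*a6^2*a5⁻¹ + 4*a1^2*a2^2*a3*a4*a5^3*a6^2 + 8*a1^2*a2^2*a3^2*a4^2*a5^2*a6^2 + 4*a1^2*a2^2*a3^3*a4*a5^2*a6^2*a5⁻¹ + 4*a1^2*a2^2*a3^3*a4*a5^3*a6^2 + 4*a1^2*a2^3*a3^2*a4*a5^2*a6^2*a6⁻¹ + 4*a1^2*a2^3*a3^2*a4*a5^2*a6^3 + 4*a1^3*a2*a3^2*a4*a5^3*a6^2 + 4*a1^3*a2^2*a3*a4*a5^2*a6^3 + 4*a1^3*a2^2*a3^3*a4*a5^2*a6^2*a6⁻¹ + 4*a1^3*a2^3*a3^2*a4*a5^2*a6^2*a5⁻¹ + -4*a1^4*a2^2*a3^2*a4^2*a5^2*a6^2)) * e4 + ((4*a1*a2*a3^2*a4*a5*a6^2 + 4*a1*a2^2*a3^2*a4^2*a5*a6^2*a6⁻¹ + 4*a1*a2^2*a3^2*a4^2*a5*a6^3 + 4*a1*a2^3*a3^2*a4^3*a5*a6^2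 + -4*a1^2*a3^2*a4^2*a5^2*a6^2 + 4*a1^2*a2*a3*a4^2*a5*a6^2*a6⁻¹ + 4*a1^2*a2*a3^3*a4^2*a5*a6^3 + 4*a1^2*a2^2*a3*a4*a5*a6^2 + 4*a1^2*a2^2*a3*a4^3*a5*a6^2 + 8*a1^2*a2^2*a3^2*a4^2*a5^2*a6^2 + 4*a1^2*a2^2*a3^3*a4*a5*a6^2 + 4*a1^2*a2^2*a3^3*a4^3*a5*a6^2 + 4*a1^2*a2^3*a3*a4^2*a5*a6^3 + 4*a1^2*a2^3*a3^3*a4^2*a5*a6^2*a6⁻¹ + -4*a1^2*a2^4*a3^2*a4^2*a5^2*a6^2 + 4*a1^3*a2*a3^2*a4^3*a5*a6^2 + 4*a1^3*a2^2*a3^2*a4^2*a5*a6^2*a6⁻¹ + 4*a1^3*a2^2*a3^2*a4^2*a5*a6^3 + 4*a1^3*a2^3*a3^2*a4*a5*a6^2)) * e5 + ((4*a1*a2^2*a3*a4*a5^2*a6 + 4*a1*a2^2*a3^2*a4^2*a5*a6 + 4*a1*a2^2*a3^2*a4^2*a5^3*a6 + 4*a1*a2^2*a3^3*a4^3*a5^2*a6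 + 4*a1^2*a2*a3*a4^2*a5*a6 + 4*a1^2*a2*a3^2*a4*a5^2*a6 + 4*a1^2*a2*a3^2*a4^3*a5^2*a6 + 4*a1^2*a2*a3^3*a4^2*a5^3*a6 + -4*a1^2*a2^2*a4^2*a5^2*a6^2 + 8*a1^2*a2^2*a3^2*a4^2*a5^2*a6^2 + -4*a1^2*a2^2*a3^4*a4^2*a5^2*a6^2 + 4*a1^2*a2^3*a3*a4^2*a5^3*a6 + 4*a1^2*a2^3*a3^2*a4*a5^2*a6 + 4*a1^2*a2^3*a3^2*a4^3*a5^2*a6 + 4*a1^2*a2^3*a3^3*a4^2*a5*a6 + 4*a1^3*a2^2*a3*a4^3*a5^2*a6 + 4*a1^3*a2^2*a3^2*a4^2*a5*a6 + 4*a1^3*a2^2*a3^2*a4^2*a5^3*a6 + 4*a1^3*a2^2*a3^3*a4*a5^2*a6)) * e6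
end

section
/- Let A₁,…,A₆ be real numbers and set a_k := exp(√−1·A_k) for k = 1,…,6. Then: (i) q₂ = e^{√−1(A₁+⋯+A₆)} q_A; (ii) q₁ = 4 e^{√−1(A₁+⋯+A₆)} S where S := sin A₁ sin A₄ + sin A₂ sin A₅ + sin A₃ sin A₆; (iii) q₁² − 4 q₀ q₂ = 16 e^{2√−1(A₁+⋯+A₆)} det G_A; and consequently (iv) if q_A ≠ 0, then for any complex number ζ with ζ² = det G_A, the two roots (with multiplicity) of the quadratic q₂ z² + q₁ z + q₀ are exactly −(2/q_A)(S − ζ) and −(2/q_A)(S + ζ). -/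
open Complex

/-- `q_A` for real dihedral angles `A₁,…,A₆`. -/
noncomputable def qA (A1 A2 A3 A4 A5 A6 : ℝ) : ℂ :=
  Complex.exp (I*(A1+A4)) + Complex.exp (I*(A2+A5)) + Complex.exp (I*(A3+A6))
    + Complex.exp (I*(A1+A2+A6)) + Complex.exp (I*(A1+A3+A5))
    + Complex.exp (I*(A2+A3+A4)) + Complex.exp (I*(A4+A5+A6))
    + Complex.exp (I*(A1+A2+A3+A4+A5+A6))

/-- The Gram matrix in terms of dihedral angles. -/
noncomputable def GA (A1 A2 A3 A4 A5 A6 : ℝ) : Matrix (Fin 4) (Fin 4) ℝ :=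
  !![1, -Real.cos A1, -Real.cos A2, -Real.cos A6;
     -Real.cos A1, 1, -Real.cos A3, -Real.cos A5;
     -Real.cos A2, -Real.cos A3, 1, -Real.cos A4;
     -Real.cos A6, -Real.cos A5, -Real.cos A4, 1]

lemma sincos_aux (x : ℝ) (a : ℂ) (ha : a = Complex.exp (I * x)) :
    ((Real.sin x : ℝ) : ℂ) = (a - a⁻¹)/(2*I) ∧ (Complex.cos (x:ℂ)) = (a + a⁻¹)/2 := by
  have hc : a = Complex.cos x + Complex.sin x * I := by rw [ha, mul_comm, Complex.exp_mul_I]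
  have hi : a⁻¹ = Complex.cos x - Complex.sin x * I := by
    rw [ha, ← Complex.exp_neg, show -(I*(x:ℂ)) = (-x)*I by ring, Complex.exp_mul_I,
      Complex.cos_neg, Complex.sin_neg]; ring
  constructor
  · rw [Complex.ofReal_sin, hi, hc]; field_simp; ring
  · rw [hi, hc]; ring

lemma sinmul_aux (x y : ℝ) (a b : ℂ)
    (hx : ((Real.sin x : ℝ) : ℂ) = (a - a⁻¹)/(2*I)) (hy : ((Real.sin y : ℝ) : ℂ) = (b - b⁻¹)/(2*I)) :
    ((Real.sin x * Real.sin y : ℝ) : ℂ) = -((a - a⁻¹)*(b - b⁻¹))/4 := by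
  rw [Complex.ofReal_mul, hx, hy, div_mul_div_comm,
    show ((2:ℂ)*I)*(2*I) = 4*(I*I) from by ring, Complex.I_mul_I]
  ring

theorem stmt2 (A1 A2 A3 A4 A5 A6 : ℝ)
    (a1 a2 a3 a4 a5 a6 : ℂ)
    (ha1 : a1 = Complex.exp (I * A1)) (ha2 : a2 = Complex.exp (I * A2))
    (ha3 : a3 = Complex.exp (I * A3)) (ha4 : a4 = Complex.exp (I * A4))
    (ha5 : a5 = Complex.exp (I * A5)) (ha6 : a6 = Complex.exp (I * A6)) :
    q2 a1 a2 a3 a4 a5 a6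
        = Complex.exp (I*(A1+A2+A3+A4+A5+A6)) * qA A1 A2 A3 A4 A5 A6 ∧
    q1 a1 a2 a3 a4 a5 a6
        = 4 * Complex.exp (I*(A1+A2+A3+A4+A5+A6)) *
            ((Real.sin A1 * Real.sin A4 + Real.sin A2 * Real.sin A5
              + Real.sin A3 * Real.sin A6 : ℝ) : ℂ) ∧
    (q1 a1 a2 a3 a4 a5 a6)^2
        - 4 * q0 a1 a2 a3 a4 a5 a6 * q2 a1 a2 a3 a4 a5 a6
        = 16 * Complex.exp (2*I*(A1+A2+A3+A4+A5+A6)) *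
            ((GA A1 A2 A3 A4 A5 A6).det : ℂ) ∧
    (qA A1 A2 A3 A4 A5 A6 ≠ 0 →
      ∀ ζ : ℂ, ζ^2 = ((GA A1 A2 A3 A4 A5 A6).det : ℂ) →
        ∀ z : ℂ,
          q2 a1 a2 a3 a4 a5 a6 * z^2 + q1 a1 a2 a3 a4 a5 a6 * z
            + q0 a1 a2 a3 a4 a5 a6
          = q2 a1 a2 a3 a4 a5 a6 *
              (z - (-(2 / qA A1 A2 A3 A4 A5 A6) *
                (((Real.sin A1 * Real.sin A4 + Real.sin A2 * Real.sin A5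
                  + Real.sin A3 * Real.sin A6 : ℝ) : ℂ) - ζ))) *
              (z - (-(2 / qA A1 A2 A3 A4 A5 A6) *
                (((Real.sin A1 * Real.sin A4 + Real.sin A2 * Real.sin A5
                  + Real.sin A3 * Real.sin A6 : ℝ) : ℂ) + ζ)))) := by
  have hn1 : a1 ≠ 0 := ha1 ▸ Complex.exp_ne_zero _
  have hn2 : a2 ≠ 0 := ha2 ▸ Complex.exp_ne_zero _
  have hn3 : a3 ≠ 0 := ha3 ▸ Complex.exp_ne_zero _
  have hn4 : a4 ≠ 0 := ha4 ▸ Complex.exp_ne_zero _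
  have hn5 : a5 ≠ 0 := ha5 ▸ Complex.exp_ne_zero _
  have hn6 : a6 ≠ 0 := ha6 ▸ Complex.exp_ne_zero _
  have hab1 : a1 * a1⁻¹ = 1 := mul_inv_cancel₀ hn1
  have hab2 : a2 * a2⁻¹ = 1 := mul_inv_cancel₀ hn2
  have hab3 : a3 * a3⁻¹ = 1 := mul_inv_cancel₀ hn3
  have hab4 : a4 * a4⁻¹ = 1 := mul_inv_cancel₀ hn4
  have hab5 : a5 * a5⁻¹ = 1 := mul_inv_cancel₀ hn5
  have hab6 : a6 * a6⁻¹ = 1 := mul_inv_cancel₀ hn6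
  obtain ⟨hs1, hc1⟩ := sincos_aux A1 a1 ha1
  obtain ⟨hs2, hc2⟩ := sincos_aux A2 a2 ha2
  obtain ⟨hs3, hc3⟩ := sincos_aux A3 a3 ha3
  obtain ⟨hs4, hc4⟩ := sincos_aux A4 a4 ha4
  obtain ⟨hs5, hc5⟩ := sincos_aux A5 a5 ha5
  obtain ⟨hs6, hc6⟩ := sincos_aux A6 a6 ha6
  have hE : Complex.exp (I*((A1:ℂ)+A2+A3+A4+A5+A6)) = a1*a2*a3*a4*a5*a6 := by
    rw [ha1, ha2, ha3, ha4, ha5, ha6, ← Complex.exp_add, ← Complex.exp_add, ← Complex.exp_add,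
      ← Complex.exp_add, ← Complex.exp_add]
    ring_nf
  have hE2 : Complex.exp (2*I*((A1:ℂ)+A2+A3+A4+A5+A6))
      = (a1*a2*a3*a4*a5*a6)*(a1*a2*a3*a4*a5*a6) := by
    rw [show (2:ℂ)*I*((A1:ℂ)+A2+A3+A4+A5+A6)
        = I*((A1:ℂ)+A2+A3+A4+A5+A6) + I*((A1:ℂ)+A2+A3+A4+A5+A6) by ring,
      Complex.exp_add, hE]
  have hqA : qA A1 A2 A3 A4 A5 A6
      = a1*a4 + a2*a5 + a3*a6 + a1*a2*a6 + a1*a3*a5 + a2*a3*a4 + a4*a5*a6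
        + a1*a2*a3*a4*a5*a6 := by
    simp only [qA, mul_add, Complex.exp_add, ← ha1, ← ha2, ← ha3, ← ha4, ← ha5, ← ha6]
  have hS : ((Real.sin A1 * Real.sin A4 + Real.sin A2 * Real.sin A5
      + Real.sin A3 * Real.sin A6 : ℝ) : ℂ)
      = -((a1 - a1⁻¹)*(a4 - a4⁻¹) + (a2 - a2⁻¹)*(a5 - a5⁻¹) + (a3 - a3⁻¹)*(a6 - a6⁻¹))/4 := by
    rw [Complex.ofReal_add, Complex.ofReal_add, sinmul_aux A1 A4 a1 a4 hs1 hs4,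
      sinmul_aux A2 A5 a2 a5 hs2 hs5, sinmul_aux A3 A6 a3 a6 hs3 hs6]
    ring
  have hdet : ((GA A1 A2 A3 A4 A5 A6).det : ℂ)
      = 1 - Complex.cos A4 ^2 - Complex.cos A3 ^2 - Complex.cos A5^2
        - Complex.cos A1^2 - Complex.cos A2^2 - Complex.cos A6^2
        + Complex.cos A1^2 * Complex.cos A4^2 + Complex.cos A2^2*Complex.cos A5^2
        + Complex.cos A3^2*Complex.cos A6^2
        - 2*Complex.cos A3*Complex.cos A4*Complex.cos A5
        - 2*Complex.cos A1*Complex.cos A3*Complex.cos A2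
        - 2*Complex.cos A1*Complex.cos A5*Complex.cos A6
        - 2*Complex.cos A2*Complex.cos A4*Complex.cos A6
        - 2*Complex.cos A1*Complex.cos A4*Complex.cos A2*Complex.cos A5
        - 2*Complex.cos A1*Complex.cos A4*Complex.cos A3*Complex.cos A6
        - 2*Complex.cos A2*Complex.cos A5*Complex.cos A3*Complex.cos A6 := by
    simp only [GA]
    rw [Matrix.det_succ_row_zero]
    simp [Fin.sum_univ_succ, Matrix.det_fin_three,
      show (Fin.succAbove 0 0 : Fin 4) = 1 from rfl,
      show (Fin.succAbove 0 1 : Fin 4) = 2 from rfl,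
      show (Fin.succAbove 0 2 : Fin 4) = 3 from rfl,
      show (Fin.succAbove 1 0 : Fin 4) = 0 from rfl,
      show (Fin.succAbove 1 1 : Fin 4) = 2 from rfl,
      show (Fin.succAbove 1 2 : Fin 4) = 3 from rfl,
      show (Fin.succAbove 2 0 : Fin 4) = 0 from rfl,
      show (Fin.succAbove 2 1 : Fin 4) = 1 from rfl,
      show (Fin.succAbove 2 2 : Fin 4) = 3 from rfl,
      show (Fin.succAbove 3 0 : Fin 4) = 0 from rfl,
      show (Fin.succAbove 3 1 : Fin 4) = 1 from rfl,
      show (Fin.succAbove 3 2 : Fin 4) = 2 from rfl]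
    ring
  have h2 : q2 a1 a2 a3 a4 a5 a6
      = Complex.exp (I*((A1:ℂ)+A2+A3+A4+A5+A6)) * qA A1 A2 A3 A4 A5 A6 := by
    rw [hE, hqA, q2]
  have h1 : q1 a1 a2 a3 a4 a5 a6
      = 4 * Complex.exp (I*((A1:ℂ)+A2+A3+A4+A5+A6)) *
          ((Real.sin A1 * Real.sin A4 + Real.sin A2 * Real.sin A5
            + Real.sin A3 * Real.sin A6 : ℝ) : ℂ) := by
    rw [hE, q1, hS]
    ring
  have hKey : q0 a1 a2 a3 a4 a5 a6 * qA A1 A2 A3 A4 A5 A6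
      = 4 * Complex.exp (I*((A1:ℂ)+A2+A3+A4+A5+A6)) *
          ((((Real.sin A1 * Real.sin A4 + Real.sin A2 * Real.sin A5
            + Real.sin A3 * Real.sin A6 : ℝ) : ℂ))^2 - ((GA A1 A2 A3 A4 A5 A6).det : ℂ)) := by
    rw [hE, hqA, q0, hS, hdet, hc1, hc2, hc3, hc4, hc5, hc6]
    linear_combination ((-1)*a2*a3*a4*a5*a6*a5⁻¹*a6⁻¹ + (-1)*a2*a3*a4*a5*a6*a3⁻¹*a4⁻¹*a6⁻¹ + (-1)*a2*a3*a4*a5*a6*a2⁻¹*a4⁻¹*a5⁻¹ + (-1)*a2*a3*a4*a5*a6*a2⁻¹*a3⁻¹ + (-1)*a2*a3*a4*a5*a6*a1⁻¹ + (-1)*a2*a3*a4*a5*a6^2*a5⁻¹ + (-1)*a2*a3*a4*a5^2*a6*a6⁻¹ + (-1)*a2*a3*a4*a5^2*a6^2 + a2*a3*a4^2*a5*a6*a1⁻¹*a4⁻¹ + (-1)*a2*a3*a4^2*a5*a6^2*a3⁻¹ + (-1)*a2*a3*a4^2*a5^2*a6*a2⁻¹ + (-1)*a2*a3^2*a4*a5*a6*a2⁻¹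 + (-1)*a2*a3^2*a4*a5*a6^2*a4⁻¹ + (-1)*a2*a3^2*a4^2*a5*a6*a6⁻¹ + (-1)*a2^2*a3*a4*a5*a6*a3⁻¹ + (-1)*a2^2*a3*a4*a5^2*a6*a4⁻¹ + (-1)*a2^2*a3*a4^2*a5*a6*a5⁻¹ + (-1)*a2^2*a3^2*a4*a5*a6 + (-2)*a1*a2*a3*a4*a5*a6 + a1*a2*a3*a4*a5*a6*a4⁻¹^2 + a1*a2*a3*a4^3*a5*a6) * hab1
      + ((-1)*a3*a4*a5*a6*a4⁻¹*a5⁻¹ + (-1)*a3*a4*a5*a6*a3⁻¹ + (-1)*a3*a4^2*a5^2*a6 + (-1)*a3^2*a4*a5*a6 + (-1)*a1*a3*a4*a5*a6*a4⁻¹*a6⁻¹ + (-1)*a1*a3*a4*a5*a6*a3⁻¹*a5⁻¹*a6⁻¹ + (-1)*a1*a3*a4*a5*a6*a2⁻¹ + (-1)*a1*a3*a4*a5*a6^2*a4⁻¹ + a1*a3*a4*a5^2*a6*a2⁻¹*a5⁻¹ + (-1)*a1*a3*a4*a5^2*a6^2*a3⁻¹ + (-1)*a1*a3*a4^2*a5*a6*a6⁻¹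 + (-1)*a1*a3*a4^2*a5*a6^2 + (-1)*a1*a3^2*a4*a5*a6^2*a5⁻¹ + (-1)*a1*a3^2*a4*a5^2*a6*a6⁻¹ + (-2)*a1*a2*a3*a4*a5*a6 + a1*a2*a3*a4*a5*a6*a5⁻¹^2 + a1*a2*a3*a4*a5^3*a6 + (-1)*a1^2*a3*a4*a5*a6*a3⁻¹ + (-1)*a1^2*a3*a4*a5^2*a6*a4⁻¹ + (-1)*a1^2*a3*a4^2*a5*a6*a5⁻¹ + (-1)*a1^2*a3^2*a4*a5*a6) * hab2
      + ((-1)*a4*a5*a6 + (-1)*a2*a4*a5*a6*a4⁻¹*a6⁻¹ + (-1)*a2*a4^2*a5*a6^2 + (-1)*a2^2*a4*a5*a6 + (-1)*a1*a4*a5*a6*a5⁻¹*a6⁻¹ + (-1)*a1*a4*a5^2*a6^2 + (-1)*a1*a2*a4*a5*a6*a4⁻¹*a5⁻¹ + (-1)*a1*a2*a4*a5*a6*a3⁻¹ + a1*a2*a4*a5*a6^2*a3⁻¹*a6⁻¹ + (-1)*a1*a2*a4*a5^2*a6*a4⁻¹ + (-1)*a1*a2*a4^2*a5*a6*a5⁻¹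 + (-1)*a1*a2*a4^2*a5^2*a6 + (-2)*a1*a2*a3*a4*a5*a6 + a1*a2*a3*a4*a5*a6*a6⁻¹^2 + a1*a2*a3*a4*a5*a6^3 + (-1)*a1*a2^2*a4*a5*a6^2*a5⁻¹ + (-1)*a1*a2^2*a4*a5^2*a6*a6⁻¹ + (-1)*a1^2*a4*a5*a6 + (-1)*a1^2*a2*a4*a5*a6^2*a4⁻¹ + (-1)*a1^2*a2*a4^2*a5*a6*a6⁻¹ + (-1)*a1^2*a2^2*a4*a5*a6) * hab3
      + ((-1)*a3*a5*a6*a5⁻¹ + (-1)*a2*a5*a6*a6⁻¹ + a2*a3*a4*a5*a6*a1⁻¹ + (-1)*a2*a3^2*a5*a6^2 + (-1)*a2^2*a3*a5^2*a6 + (-1)*a1*a3*a5*a6*a6⁻¹ + (-1)*a1*a3*a5*a6^2 + (-1)*a1*a2*a5*a6*a5⁻¹ + (-1)*a1*a2*a5^2*a6 + (-2)*a1*a2*a3*a4*a5*a6 + (-1)*a1*a2*a3^2*a5*a6*a5⁻¹ + (-1)*a1*a2*a3^2*a5^2*a6 + (-1)*a1*a2^2*a3*a5*a6*a6⁻¹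 + (-1)*a1*a2^2*a3*a5*a6^2 + (-1)*a1^2*a3*a5^2*a6 + (-1)*a1^2*a2*a5*a6^2 + (-1)*a1^2*a2*a3^2*a5*a6*a6⁻¹ + (-1)*a1^2*a2^2*a3*a5*a6*a5⁻¹ + a1^3*a2*a3*a4*a5*a6) * hab4
      + ((-1)*a3*a6 + (-1)*a2*a3*a4*a6*a6⁻¹ + (-1)*a2*a3*a4*a6^2 + (-1)*a2^2*a3*a4^2*a6 + (-1)*a1*a4*a6*a6⁻¹ + a1*a3*a4*a5*a6*a2⁻¹ + (-1)*a1*a3^2*a4*a6^2 + (-1)*a1*a2*a6 + (-1)*a1*a2*a4^2*a6 + (-2)*a1*a2*a3*a4*a5*a6 + (-1)*a1*a2*a3^2*a6 + (-1)*a1*a2*a3^2*a4^2*a6 + (-1)*a1*a2^2*a4*a6^2 + (-1)*a1*a2^2*a3^2*a4*a6*a6⁻¹ + a1*a2^3*a3*a4*a5*a6 + (-1)*a1^2*a3*a4^2*a6 + (-1)*a1^2*a2*a3*a4*a6*a6⁻¹ + (-1)*a1^2*a2*a3*a4*a6^2 + (-1)*a1^2*a2^2*a3*a6) * hab5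
      + ((-1)*a2*a5 + (-1)*a2*a3*a4 + (-1)*a2*a3*a4*a5^2 + (-1)*a2*a3^2*a4^2*a5 + (-1)*a1*a4 + (-1)*a1*a3*a5 + (-1)*a1*a3*a4^2*a5 + (-1)*a1*a3^2*a4*a5^2 + a1*a2*a4*a5*a6*a3⁻¹ + (-2)*a1*a2*a3*a4*a5*a6 + a1*a2*a3^3*a4*a5*a6 + (-1)*a1*a2^2*a4*a5^2 + (-1)*a1*a2^2*a3*a5 + (-1)*a1*a2^2*a3*a4^2*a5 + (-1)*a1*a2^2*a3^2*a4 + (-1)*a1^2*a2*a4^2*a5 + (-1)*a1^2*a2*a3*a4 + (-1)*a1^2*a2*a3*a4*a5^2 + (-1)*a1^2*a2*a3^2*a5) * hab6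
  have h3 : (q1 a1 a2 a3 a4 a5 a6)^2
      - 4 * q0 a1 a2 a3 a4 a5 a6 * q2 a1 a2 a3 a4 a5 a6
      = 16 * Complex.exp (2*I*((A1:ℂ)+A2+A3+A4+A5+A6)) *
          ((GA A1 A2 A3 A4 A5 A6).det : ℂ) := by
    rw [hE2]
    linear_combination (q1 a1 a2 a3 a4 a5 a6
        + 4 * Complex.exp (I*((A1:ℂ)+A2+A3+A4+A5+A6)) *
          ((Real.sin A1 * Real.sin A4 + Real.sin A2 * Real.sin A5
            + Real.sin A3 * Real.sin A6 : ℝ) : ℂ)) * h1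
      + (-4 * q0 a1 a2 a3 a4 a5 a6) * h2
      + (-4 * Complex.exp (I*((A1:ℂ)+A2+A3+A4+A5+A6))) * hKey
      + (16 * ((GA A1 A2 A3 A4 A5 A6).det : ℂ) *
          (Complex.exp (I*((A1:ℂ)+A2+A3+A4+A5+A6)) + a1*a2*a3*a4*a5*a6)) * hE
  refine ⟨h2, h1, h3, ?_⟩
  intro hqA0 ζ hζ z
  have hQ0 : q0 a1 a2 a3 a4 a5 a6
      = 4 * Complex.exp (I*((A1:ℂ)+A2+A3+A4+A5+A6)) *
          ((((Real.sin A1 * Real.sin A4 + Real.sin A2 * Real.sin A5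
            + Real.sin A3 * Real.sin A6 : ℝ) : ℂ))^2 - ζ^2)
          / qA A1 A2 A3 A4 A5 A6 := by
    rw [hζ, eq_div_iff hqA0]
    exact hKey
  rw [h1, h2, hQ0]
  field_simp
  ring
end

section
/- Let l₁,…,l₆ be real numbers and set a₁ := −e^{l₄}, a₂ := −e^{l₅}, a₃ := −e^{l₆}, a₄ := −e^{l₁}, a₅ := −e^{l₂}, a₆ := −e^{l₃}. Then: (i) q₂ = e^{l₁+⋯+l₆} q_l; (ii) q₁ = −4 e^{l₁+⋯+l₆} S where S := sinh l₁ sinh l₄ + sinh l₂ sinh l₅ + sinh l₃ sinh l₆; (iii) q₁² − 4 q₀ q₂ = 16 e^{2(l₁+⋯+l₆)} det G_l; and consequently (iv) if q_l ≠ 0, then for any complex number ζ with ζ² = det G_l, the two roots (with multiplicity) of the quadratic q₂ z² + q₁ z + q₀ are exactly (2/q_l)(S − ζ) and (2/q_l)(S + ζ). -/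
open Complex

/-- `q_l` for real edge lengths `l₁,…,l₆`. -/
noncomputable def ql (l1 l2 l3 l4 l5 l6 : ℝ) : ℝ :=
  Real.exp (l1+l4) + Real.exp (l2+l5) + Real.exp (l3+l6)
    - Real.exp (l1+l2+l3) - Real.exp (l1+l5+l6)
    - Real.exp (l2+l4+l6) - Real.exp (l3+l4+l5)
    + Real.exp (l1+l2+l3+l4+l5+l6)

/-- The Gram matrix in terms of edge lengths. -/
noncomputable def Gl (l1 l2 l3 l4 l5 l6 : ℝ) : Matrix (Fin 4) (Fin 4) ℝ :=
  !![-1, -Real.cosh l4, -Real.cosh l5, -Real.cosh l3;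
     -Real.cosh l4, -1, -Real.cosh l6, -Real.cosh l2;
     -Real.cosh l5, -Real.cosh l6, -1, -Real.cosh l1;
     -Real.cosh l3, -Real.cosh l2, -Real.cosh l1, -1]


set_option maxHeartbeats 1000000 in
theorem part1' (l1 l2 l3 l4 l5 l6 : ℝ) :
    q2 (-Real.exp l4) (-Real.exp l5) (-Real.exp l6) (-Real.exp l1) (-Real.exp l2) (-Real.exp l3)
      = ((Real.exp (l1+l2+l3+l4+l5+l6) : ℝ) : ℂ) * ((ql l1 l2 l3 l4 l5 l6 : ℝ) : ℂ) := by
  simp only [q2, ql]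
  push_cast
  simp only [Complex.exp_add]
  ring

lemma key (l : ℝ) : (-(Real.exp l : ℂ)) - (-(Real.exp l :ℂ))⁻¹ = -2 * Real.sinh l := by
  rw [Real.sinh_eq, inv_neg, ← Complex.ofReal_inv, ← Real.exp_neg]
  push_cast
  ring

set_option maxHeartbeats 1000000 in
theorem part2' (l1 l2 l3 l4 l5 l6 : ℝ) :
    q1 (-Real.exp l4) (-Real.exp l5) (-Real.exp l6) (-Real.exp l1) (-Real.exp l2) (-Real.exp l3)
      = -4 * ((Real.exp (l1+l2+l3+l4+l5+l6) : ℝ) : ℂ) *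
          ((Real.sinh l1 * Real.sinh l4 + Real.sinh l2 * Real.sinh l5
            + Real.sinh l3 * Real.sinh l6 : ℝ) : ℂ) := by
  simp only [q1, key]
  push_cast
  simp only [Complex.exp_add]
  ring

theorem det_fin_four' {R : Type*} [CommRing R] (a b c d e f g h i j k l m n o p : R) :
    Matrix.det !![a,b,c,d; e,f,g,h; i,j,k,l; m,n,o,p] =
      a*f*k*p - a*f*l*o - a*g*j*p + a*g*l*n + a*h*j*o - a*h*k*n
      - b*e*k*p + b*e*l*o + b*g*i*p - b*g*l*m - b*h*i*o + b*h*k*m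
      + c*e*j*p - c*e*l*n - c*f*i*p + c*f*l*m + c*h*i*n - c*h*j*m
      - d*e*j*o + d*e*k*n + d*f*i*o - d*f*k*m - d*g*i*n + d*g*j*m := by
  simp [Matrix.det_succ_row_zero, Fin.sum_univ_succ, Fin.succAbove,
    show (Fin.castSucc 2 : Fin 4) = 2 from rfl]
  ring

lemma key2 (l : ℝ) : (-(Real.exp l : ℂ)) - (-(Real.exp l :ℂ))⁻¹
    = -((Real.exp l : ℝ) : ℂ) + ((Real.exp (-l) : ℝ) : ℂ) := by
  rw [Real.exp_neg, inv_neg, ← Complex.ofReal_inv]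
  ring

set_option maxHeartbeats 4000000 in
theorem part3' (l1 l2 l3 l4 l5 l6 : ℝ) :
    (q1 (-Real.exp l4) (-Real.exp l5) (-Real.exp l6) (-Real.exp l1) (-Real.exp l2) (-Real.exp l3))^2
      - 4 * q0 (-Real.exp l4) (-Real.exp l5) (-Real.exp l6) (-Real.exp l1) (-Real.exp l2) (-Real.exp l3)
          * q2 (-Real.exp l4) (-Real.exp l5) (-Real.exp l6) (-Real.exp l1) (-Real.exp l2) (-Real.exp l3)
      = 16 * ((Real.exp (2*(l1+l2+l3+l4+l5+l6)) : ℝ) : ℂ) *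
          ((Gl l1 l2 l3 l4 l5 l6).det : ℂ) := by
  have e2 : (2:ℝ)*(l1+l2+l3+l4+l5+l6)
      = (l1+l1)+(l2+l2)+(l3+l3)+(l4+l4)+(l5+l5)+(l6+l6) := by ring
  have hv1 : Complex.exp (l1:ℂ) * Complex.exp (-(l1:ℂ)) = 1 := by
    rw [← Complex.exp_add]; simp
  have hv2 : Complex.exp (l2:ℂ) * Complex.exp (-(l2:ℂ)) = 1 := by
    rw [← Complex.exp_add]; simp
  have hv3 : Complex.exp (l3:ℂ) * Complex.exp (-(l3:ℂ)) = 1 := by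
    rw [← Complex.exp_add]; simp
  have hv4 : Complex.exp (l4:ℂ) * Complex.exp (-(l4:ℂ)) = 1 := by
    rw [← Complex.exp_add]; simp
  have hv5 : Complex.exp (l5:ℂ) * Complex.exp (-(l5:ℂ)) = 1 := by
    rw [← Complex.exp_add]; simp
  have hv6 : Complex.exp (l6:ℂ) * Complex.exp (-(l6:ℂ)) = 1 := by
    rw [← Complex.exp_add]; simp
  simp only [q0, q1, q2, Gl, det_fin_four', key2, Real.cosh_eq, e2,
    Matrix.cons_val_zero, Matrix.cons_val_one, Matrix.head_cons,
    Matrix.cons_val_two, Matrix.cons_val_three, Matrix.of_apply,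
    Matrix.cons_val', Matrix.head_fin_const, Matrix.cons_val_fin_one, Matrix.tail_cons]
  push_cast
  simp only [Complex.exp_add]
  set U1 := Complex.exp (l1:ℂ) with hU1
  set U2 := Complex.exp (l2:ℂ) with hU2
  set U3 := Complex.exp (l3:ℂ) with hU3
  set U4 := Complex.exp (l4:ℂ) with hU4
  set U5 := Complex.exp (l5:ℂ) with hU5
  set U6 := Complex.exp (l6:ℂ) with hU6
  set V1 := Complex.exp (-(l1:ℂ)) with hV1
  set V2 := Complex.exp (-(l2:ℂ)) with hV2
  set V3 := Complex.exp (-(l3:ℂ)) with hV3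
  set V4 := Complex.exp (-(l4:ℂ)) with hV4
  set V5 := Complex.exp (-(l5:ℂ)) with hV5
  set V6 := Complex.exp (-(l6:ℂ)) with hV6
  linear_combination ((4:ℂ)*U2^2*U3^2*U4^2*U5^2*U6^2 + (-4:ℂ)*U2^2*U3^2*U4^3*U5^2*U6^2*V4 + (-4:ℂ)*U1*U2^2*U3^2*U4^2*U5^2*U6^2*V3*V5 + (4:ℂ)*U1*U2^2*U3^2*U4^2*U5^2*U6^2*V3*V4*V6 + (-4:ℂ)*U1*U2^2*U3^2*U4^2*U5^2*U6^2*V2*V6 + (4:ℂ)*U1*U2^2*U3^2*U4^2*U5^2*U6^2*V2*V4*V5 + (4:ℂ)*U1*U2^2*U3^2*U4^2*U5^2*U6^2*V1 + (-4:ℂ)*U1*U2^2*U3^2*U4^2*U5^2*U6^3*V2 + (-4:ℂ)*U1*U2^2*U3^2*U4^2*U5^3*U6^2*V3 + (-4:ℂ)*U1*U2^2*U3^2*U4^3*U5^2*U6^2*V1*V4 + (4:ℂ)*U1*U2^2*U3^2*U4^3*U5^2*U6^3*V3 + (4:ℂ)*U1*U2^2*U3^2*U4^3*U5^3*U6^2*V2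 + (-4:ℂ)*U1*U2^2*U3^3*U4^2*U5^2*U6^2*V5 + (4:ℂ)*U1*U2^2*U3^3*U4^2*U5^2*U6^3*V4 + (-4:ℂ)*U1*U2^2*U3^3*U4^2*U5^3*U6^2 + (4:ℂ)*U1*U2^2*U3^3*U4^3*U5^2*U6^2*V6 + (-4:ℂ)*U1*U2^3*U3^2*U4^2*U5^2*U6^2*V6 + (-4:ℂ)*U1*U2^3*U3^2*U4^2*U5^2*U6^3 + (4:ℂ)*U1*U2^3*U3^2*U4^2*U5^3*U6^2*V4 + (4:ℂ)*U1*U2^3*U3^2*U4^3*U5^2*U6^2*V5 + (8:ℂ)*U1^2*U2^2*U3^2*U4^2*U5^2*U6^2 + (-4:ℂ)*U1^2*U2^2*U3^2*U4^2*U5^2*U6^2*V4^2 + (-4:ℂ)*U1^2*U2^2*U3^2*U4^4*U5^2*U6^2) * hv1 + ((-4:ℂ)*U1*U2*U3^2*U4^2*U5^2*U6^2*V6 + (4:ℂ)*U1*U2*U3^2*U4^2*U5^2*U6^2*V4*V5 + (-4:ℂ)*U1*U2*U3^2*U4^2*U5^2*U6^3 + (4:ℂ)*U1*U2*U3^2*U4^3*U5^3*U6^2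 + (4:ℂ)*U1^2*U3^2*U4^2*U5^2*U6^2 + (-4:ℂ)*U1^2*U3^2*U4^2*U5^3*U6^2*V5 + (4:ℂ)*U1^2*U2*U3^2*U4^2*U5^2*U6^2*V3*V5*V6 + (-4:ℂ)*U1^2*U2*U3^2*U4^2*U5^2*U6^2*V3*V4 + (4:ℂ)*U1^2*U2*U3^2*U4^2*U5^2*U6^2*V2 + (-4:ℂ)*U1^2*U2*U3^2*U4^2*U5^3*U6^2*V2*V5 + (4:ℂ)*U1^2*U2*U3^2*U4^2*U5^3*U6^3*V3 + (-4:ℂ)*U1^2*U2*U3^2*U4^3*U5^2*U6^2*V3 + (-4:ℂ)*U1^2*U2*U3^3*U4^2*U5^2*U6^2*V4 + (4:ℂ)*U1^2*U2*U3^3*U4^2*U5^2*U6^3*V5 + (4:ℂ)*U1^2*U2*U3^3*U4^2*U5^3*U6^2*V6 + (-4:ℂ)*U1^2*U2*U3^3*U4^3*U5^2*U6^2 + (8:ℂ)*U1^2*U2^2*U3^2*U4^2*U5^2*U6^2 + (-4:ℂ)*U1^2*U2^2*U3^2*U4^2*U5^2*U6^2*V5^2 + (-4:ℂ)*U1^2*U2^2*U3^2*U4^2*U5^4*U6^2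 + (-4:ℂ)*U1^3*U2*U3^2*U4^2*U5^2*U6^2*V6 + (-4:ℂ)*U1^3*U2*U3^2*U4^2*U5^2*U6^3 + (4:ℂ)*U1^3*U2*U3^2*U4^2*U5^3*U6^2*V4 + (4:ℂ)*U1^3*U2*U3^2*U4^3*U5^2*U6^2*V5) * hv2 + ((-4:ℂ)*U1*U2^2*U3*U4^2*U5^2*U6^2*V5 + (4:ℂ)*U1*U2^2*U3*U4^2*U5^2*U6^2*V4*V6 + (-4:ℂ)*U1*U2^2*U3*U4^2*U5^3*U6^2 + (4:ℂ)*U1*U2^2*U3*U4^3*U5^2*U6^3 + (4:ℂ)*U1^2*U2*U3*U4^2*U5^2*U6^2*V5*V6 + (-4:ℂ)*U1^2*U2*U3*U4^2*U5^2*U6^2*V4 + (4:ℂ)*U1^2*U2*U3*U4^2*U5^3*U6^3 + (-4:ℂ)*U1^2*U2*U3*U4^3*U5^2*U6^2 + (4:ℂ)*U1^2*U2^2*U4^2*U5^2*U6^2 + (-4:ℂ)*U1^2*U2^2*U4^2*U5^2*U6^3*V6 + (4:ℂ)*U1^2*U2^2*U3*U4^2*U5^2*U6^2*V3 + (-4:ℂ)*U1^2*U2^2*U3*U4^2*U5^2*U6^3*V3*V6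 + (8:ℂ)*U1^2*U2^2*U3^2*U4^2*U5^2*U6^2 + (-4:ℂ)*U1^2*U2^2*U3^2*U4^2*U5^2*U6^2*V6^2 + (-4:ℂ)*U1^2*U2^2*U3^2*U4^2*U5^2*U6^4 + (-4:ℂ)*U1^2*U2^3*U3*U4^2*U5^2*U6^2*V4 + (4:ℂ)*U1^2*U2^3*U3*U4^2*U5^2*U6^3*V5 + (4:ℂ)*U1^2*U2^3*U3*U4^2*U5^3*U6^2*V6 + (-4:ℂ)*U1^2*U2^3*U3*U4^3*U5^2*U6^2 + (-4:ℂ)*U1^3*U2^2*U3*U4^2*U5^2*U6^2*V5 + (4:ℂ)*U1^3*U2^2*U3*U4^2*U5^2*U6^3*V4 + (-4:ℂ)*U1^3*U2^2*U3*U4^2*U5^3*U6^2 + (4:ℂ)*U1^3*U2^2*U3*U4^3*U5^2*U6^2*V6) * hv3 + ((-4:ℂ)*U2^2*U3^2*U4^2*U5^2*U6^2 + (4:ℂ)*U1*U2*U3^2*U4*U5^2*U6^2*V5 + (4:ℂ)*U1*U2^2*U3*U4*U5^2*U6^2*V6 + (4:ℂ)*U1*U2^2*U3^3*U4*U5^2*U6^3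 + (4:ℂ)*U1*U2^3*U3^2*U4*U5^3*U6^2 + (-4:ℂ)*U1^2*U2*U3*U4*U5^2*U6^2 + (-4:ℂ)*U1^2*U2*U3^3*U4*U5^2*U6^2 + (-4:ℂ)*U1^2*U2^2*U3^2*U4*U5^2*U6^2*V5*V6 + (-4:ℂ)*U1^2*U2^2*U3^2*U4*U5^2*U6^3*V5 + (-4:ℂ)*U1^2*U2^2*U3^2*U4*U5^3*U6^2*V6 + (-4:ℂ)*U1^2*U2^2*U3^2*U4*U5^3*U6^3 + (8:ℂ)*U1^2*U2^2*U3^2*U4^2*U5^2*U6^2 + (-4:ℂ)*U1^2*U2^3*U3*U4*U5^2*U6^2 + (-4:ℂ)*U1^2*U2^3*U3^3*U4*U5^2*U6^2 + (4:ℂ)*U1^3*U2*U3^2*U4*U5^3*U6^2 + (4:ℂ)*U1^3*U2^2*U3*U4*U5^2*U6^3 + (4:ℂ)*U1^3*U2^2*U3^3*U4*U5^2*U6^2*V6 + (4:ℂ)*U1^3*U2^3*U3^2*U4*U5^2*U6^2*V5 + (-4:ℂ)*U1^4*U2^2*U3^2*U4^2*U5^2*U6^2) * hv4 + ((4:ℂ)*U1*U2*U3^2*U4*U5*U6^2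 + (-4:ℂ)*U1*U2^2*U3*U4^2*U5*U6^2 + (-4:ℂ)*U1*U2^2*U3^3*U4^2*U5*U6^2 + (4:ℂ)*U1*U2^3*U3^2*U4^3*U5*U6^2 + (-4:ℂ)*U1^2*U3^2*U4^2*U5^2*U6^2 + (4:ℂ)*U1^2*U2*U3*U4^2*U5*U6^2*V6 + (4:ℂ)*U1^2*U2*U3^3*U4^2*U5*U6^3 + (-4:ℂ)*U1^2*U2^2*U3^2*U4*U5*U6^2*V6 + (-4:ℂ)*U1^2*U2^2*U3^2*U4*U5*U6^3 + (8:ℂ)*U1^2*U2^2*U3^2*U4^2*U5^2*U6^2 + (-4:ℂ)*U1^2*U2^2*U3^2*U4^3*U5*U6^2*V6 + (-4:ℂ)*U1^2*U2^2*U3^2*U4^3*U5*U6^3 + (4:ℂ)*U1^2*U2^3*U3*U4^2*U5*U6^3 + (4:ℂ)*U1^2*U2^3*U3^3*U4^2*U5*U6^2*V6 + (-4:ℂ)*U1^2*U2^4*U3^2*U4^2*U5^2*U6^2 + (4:ℂ)*U1^3*U2*U3^2*U4^3*U5*U6^2 + (-4:ℂ)*U1^3*U2^2*U3*U4^2*U5*U6^2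 + (-4:ℂ)*U1^3*U2^2*U3^3*U4^2*U5*U6^2 + (4:ℂ)*U1^3*U2^3*U3^2*U4*U5*U6^2) * hv5 + ((-4:ℂ)*U1*U2*U3^2*U4^2*U5^2*U6 + (4:ℂ)*U1*U2^2*U3*U4*U5^2*U6 + (4:ℂ)*U1*U2^2*U3^3*U4^3*U5^2*U6 + (-4:ℂ)*U1*U2^3*U3^2*U4^2*U5^2*U6 + (4:ℂ)*U1^2*U2*U3*U4^2*U5*U6 + (4:ℂ)*U1^2*U2*U3^3*U4^2*U5^3*U6 + (-4:ℂ)*U1^2*U2^2*U4^2*U5^2*U6^2 + (-4:ℂ)*U1^2*U2^2*U3^2*U4*U5*U6 + (-4:ℂ)*U1^2*U2^2*U3^2*U4*U5^3*U6 + (8:ℂ)*U1^2*U2^2*U3^2*U4^2*U5^2*U6^2 + (-4:ℂ)*U1^2*U2^2*U3^2*U4^3*U5*U6 + (-4:ℂ)*U1^2*U2^2*U3^2*U4^3*U5^3*U6 + (-4:ℂ)*U1^2*U2^2*U3^4*U4^2*U5^2*U6^2 + (4:ℂ)*U1^2*U2^3*U3*U4^2*U5^3*U6 + (4:ℂ)*U1^2*U2^3*U3^3*U4^2*U5*U6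 + (-4:ℂ)*U1^3*U2*U3^2*U4^2*U5^2*U6 + (4:ℂ)*U1^3*U2^2*U3*U4^3*U5^2*U6 + (4:ℂ)*U1^3*U2^2*U3^3*U4*U5^2*U6 + (-4:ℂ)*U1^3*U2^3*U3^2*U4^2*U5^2*U6) * hv6
theorem stmt3 (l1 l2 l3 l4 l5 l6 : ℝ)
    (a1 a2 a3 a4 a5 a6 : ℂ)
    (ha1 : a1 = -Real.exp l4) (ha2 : a2 = -Real.exp l5) (ha3 : a3 = -Real.exp l6)
    (ha4 : a4 = -Real.exp l1) (ha5 : a5 = -Real.exp l2) (ha6 : a6 = -Real.exp l3) :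
    q2 a1 a2 a3 a4 a5 a6
        = ((Real.exp (l1+l2+l3+l4+l5+l6) : ℝ) : ℂ) * ((ql l1 l2 l3 l4 l5 l6 : ℝ) : ℂ) ∧
    q1 a1 a2 a3 a4 a5 a6
        = -4 * ((Real.exp (l1+l2+l3+l4+l5+l6) : ℝ) : ℂ) *
            ((Real.sinh l1 * Real.sinh l4 + Real.sinh l2 * Real.sinh l5
              + Real.sinh l3 * Real.sinh l6 : ℝ) : ℂ) ∧
    (q1 a1 a2 a3 a4 a5 a6)^2
        - 4 * q0 a1 a2 a3 a4 a5 a6 * q2 a1 a2 a3 a4 a5 a6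
        = 16 * ((Real.exp (2*(l1+l2+l3+l4+l5+l6)) : ℝ) : ℂ) *
            ((Gl l1 l2 l3 l4 l5 l6).det : ℂ) ∧
    (ql l1 l2 l3 l4 l5 l6 ≠ 0 →
      ∀ ζ : ℂ, ζ^2 = ((Gl l1 l2 l3 l4 l5 l6).det : ℂ) →
        ∀ z : ℂ,
          q2 a1 a2 a3 a4 a5 a6 * z^2 + q1 a1 a2 a3 a4 a5 a6 * z
            + q0 a1 a2 a3 a4 a5 a6
          = q2 a1 a2 a3 a4 a5 a6 *
              (z - (2 / ((ql l1 l2 l3 l4 l5 l6 : ℝ) : ℂ)) *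
                (((Real.sinh l1 * Real.sinh l4 + Real.sinh l2 * Real.sinh l5
                  + Real.sinh l3 * Real.sinh l6 : ℝ) : ℂ) - ζ)) *
              (z - (2 / ((ql l1 l2 l3 l4 l5 l6 : ℝ) : ℂ)) *
                (((Real.sinh l1 * Real.sinh l4 + Real.sinh l2 * Real.sinh l5
                  + Real.sinh l3 * Real.sinh l6 : ℝ) : ℂ) + ζ))) := by
  subst ha1 ha2 ha3 ha4 ha5 ha6
  have h2 := part1' l1 l2 l3 l4 l5 l6
  have h1 := part2' l1 l2 l3 l4 l5 l6
  have h3 := part3' l1 l2 l3 l4 l5 l6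
  refine ⟨h2, h1, h3, ?_⟩
  intro hq ζ hζ z
  set E : ℂ := ((Real.exp (l1+l2+l3+l4+l5+l6) : ℝ) : ℂ) with hE
  set Q : ℂ := ((ql l1 l2 l3 l4 l5 l6 : ℝ) : ℂ) with hQdef
  set S : ℂ := ((Real.sinh l1 * Real.sinh l4 + Real.sinh l2 * Real.sinh l5
      + Real.sinh l3 * Real.sinh l6 : ℝ) : ℂ) with hS
  set D : ℂ := ((Gl l1 l2 l3 l4 l5 l6).det : ℂ) with hD
  have hE2 : ((Real.exp (2*(l1+l2+l3+l4+l5+l6)) : ℝ) : ℂ) = E^2 := by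
    rw [hE, two_mul, Real.exp_add]; push_cast; ring
  have hEne : E ≠ 0 := by
    rw [hE]; exact_mod_cast Real.exp_ne_zero _
  have hQne : Q ≠ 0 := by
    rw [hQdef]; exact_mod_cast hq
  rw [h1, h2, hE2] at h3
  have h4 : (4*E)*(q0 (-Real.exp l4) (-Real.exp l5) (-Real.exp l6) (-Real.exp l1)
        (-Real.exp l2) (-Real.exp l3) * Q)
      = (4*E)*(4*E*(S^2 - D)) := by
    linear_combination -h3
  have hq0 : q0 (-Real.exp l4) (-Real.exp l5) (-Real.exp l6) (-Real.exp l1)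
        (-Real.exp l2) (-Real.exp l3) = 4*E*(S^2 - D)/Q := by
    rw [eq_div_iff hQne]
    exact mul_left_cancel₀ (by simp [hEne]) h4
  rw [h1, h2, hq0, ← hζ]
  field_simp
  ring
end

section
/- Let a₁,…,a₆ be nonzero complex numbers and let w be a complex number with q₂ w² + q₁ w + q₀ = 0. Then Φ(w) = Ψ(w), where Φ(z) := (1 + z a₁a₂a₃)(1 + z a₁a₅a₆)(1 + z a₂a₄a₆)(1 + z a₃a₄a₅) and Ψ(z) := (1 − z)(1 − z a₁a₂a₄a₅)(1 − z a₁a₃a₄a₆)(1 − z a₂a₃a₅a₆). Moreover, if Ψ(w) ≠ 0 then the quantity S(w) := −log(1−w) − log(1 − w a₁a₂a₄a₅) − log(1 − w a₁a₃a₄a₆) − log(1 − w a₂a₃a₅a₆) + log(1 + w a₁a₂a₃) + log(1 + w a₁a₅a₆) + log(1 + w a₂a₄a₆) + log(1 + w a₃a₄a₅), taken with the principal branch of the complex logarithm, satisfies exp(S(w)) = 1; equivalently, S(w) ∈ 2π√−1·ℤ. -/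
open Complex

theorem stmt4 (a1 a2 a3 a4 a5 a6 : ℂ)
    (h1 : a1 ≠ 0) (h2 : a2 ≠ 0) (h3 : a3 ≠ 0)
    (h4 : a4 ≠ 0) (h5 : a5 ≠ 0) (h6 : a6 ≠ 0)
    (w : ℂ)
    (hw : q2 a1 a2 a3 a4 a5 a6 * w^2 + q1 a1 a2 a3 a4 a5 a6 * w
        + q0 a1 a2 a3 a4 a5 a6 = 0) :
    (1 + w*a1*a2*a3) * (1 + w*a1*a5*a6) * (1 + w*a2*a4*a6) * (1 + w*a3*a4*a5)
      = (1 - w) * (1 - w*a1*a2*a4*a5) * (1 - w*a1*a3*a4*a6) * (1 - w*a2*a3*a5*a6) ∧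
    ((1 - w) * (1 - w*a1*a2*a4*a5) * (1 - w*a1*a3*a4*a6) * (1 - w*a2*a3*a5*a6) ≠ 0 →
      Complex.exp
        (-Complex.log (1 - w) - Complex.log (1 - w*a1*a2*a4*a5)
          - Complex.log (1 - w*a1*a3*a4*a6) - Complex.log (1 - w*a2*a3*a5*a6)
          + Complex.log (1 + w*a1*a2*a3) + Complex.log (1 + w*a1*a5*a6)
          + Complex.log (1 + w*a2*a4*a6) + Complex.log (1 + w*a3*a4*a5)) = 1 ∧
      ∃ k : ℤ,
        -Complex.log (1 - w) - Complex.log (1 - w*a1*a2*a4*a5)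
          - Complex.log (1 - w*a1*a3*a4*a6) - Complex.log (1 - w*a2*a3*a5*a6)
          + Complex.log (1 + w*a1*a2*a3) + Complex.log (1 + w*a1*a5*a6)
          + Complex.log (1 + w*a2*a4*a6) + Complex.log (1 + w*a3*a4*a5)
          = 2 * Real.pi * I * k) := by
  have heq : (1 + w*a1*a2*a3) * (1 + w*a1*a5*a6) * (1 + w*a2*a4*a6) * (1 + w*a3*a4*a5)
      = (1 - w) * (1 - w*a1*a2*a4*a5) * (1 - w*a1*a3*a4*a6) * (1 - w*a2*a3*a5*a6) := by
    have key : (1 + w*a1*a2*a3) * (1 + w*a1*a5*a6) * (1 + w*a2*a4*a6) * (1 + w*a3*a4*a5)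
        - (1 - w) * (1 - w*a1*a2*a4*a5) * (1 - w*a1*a3*a4*a6) * (1 - w*a2*a3*a5*a6)
        = w * (q2 a1 a2 a3 a4 a5 a6 * w^2 + q1 a1 a2 a3 a4 a5 a6 * w
            + q0 a1 a2 a3 a4 a5 a6) := by
      unfold q0 q1 q2
      field_simp
      ring
    rw [hw, mul_zero, sub_eq_zero] at key
    exact key
  refine ⟨heq, fun hne => ?_⟩
  have hb1 : (1 : ℂ) - w ≠ 0 := fun h => hne (by rw [h]; ring)
  have hb2 : (1 : ℂ) - w*a1*a2*a4*a5 ≠ 0 := fun h => hne (by rw [h]; ring)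
  have hb3 : (1 : ℂ) - w*a1*a3*a4*a6 ≠ 0 := fun h => hne (by rw [h]; ring)
  have hb4 : (1 : ℂ) - w*a2*a3*a5*a6 ≠ 0 := fun h => hne (by rw [h]; ring)
  have hexp : Complex.exp
        (-Complex.log (1 - w) - Complex.log (1 - w*a1*a2*a4*a5)
          - Complex.log (1 - w*a1*a3*a4*a6) - Complex.log (1 - w*a2*a3*a5*a6)
          + Complex.log (1 + w*a1*a2*a3) + Complex.log (1 + w*a1*a5*a6)
          + Complex.log (1 + w*a2*a4*a6) + Complex.log (1 + w*a3*a4*a5)) = 1 := by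
    rw [show (-Complex.log (1 - w) - Complex.log (1 - w*a1*a2*a4*a5)
          - Complex.log (1 - w*a1*a3*a4*a6) - Complex.log (1 - w*a2*a3*a5*a6)
          + Complex.log (1 + w*a1*a2*a3) + Complex.log (1 + w*a1*a5*a6)
          + Complex.log (1 + w*a2*a4*a6) + Complex.log (1 + w*a3*a4*a5))
        = (Complex.log (1 + w*a1*a2*a3) + (Complex.log (1 + w*a1*a5*a6)
          + (Complex.log (1 + w*a2*a4*a6) + Complex.log (1 + w*a3*a4*a5))))
          - (Complex.log (1 - w) + (Complex.log (1 - w*a1*a2*a4*a5)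
          + (Complex.log (1 - w*a1*a3*a4*a6) + Complex.log (1 - w*a2*a3*a5*a6)))) by ring,
      Complex.exp_sub]
    simp only [Complex.exp_add, Complex.exp_log hb1, Complex.exp_log hb2,
      Complex.exp_log hb3, Complex.exp_log hb4]
    have hn1 : (1 : ℂ) + w*a1*a2*a3 ≠ 0 := by
      intro h
      apply hne
      rw [← heq, h]; ring
    have hn2 : (1 : ℂ) + w*a1*a5*a6 ≠ 0 := by
      intro h; apply hne; rw [← heq, h]; ring
    have hn3 : (1 : ℂ) + w*a2*a4*a6 ≠ 0 := by
      intro h; apply hne; rw [← heq, h]; ring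
    have hn4 : (1 : ℂ) + w*a3*a4*a5 ≠ 0 := by
      intro h; apply hne; rw [← heq, h]; ring
    rw [Complex.exp_log hn1, Complex.exp_log hn2, Complex.exp_log hn3, Complex.exp_log hn4]
    rw [div_eq_one_iff_eq (by intro h; exact hne (by rw [← h]; ring))]
    linear_combination heq
  refine ⟨hexp, ?_⟩
  rcases Complex.exp_eq_one_iff.mp hexp with ⟨k, hk⟩
  exact ⟨k, by rw [hk]; ring⟩
end

section
/- Let a₁,…,a₆ be nonzero complex numbers and let w be a complex number with q₂ w² + q₁ w + q₀ = 0. Then the following equality of absolute values holds: |1 − w| · |1 − w a₁a₂a₄a₅| · |1 − w a₁a₃a₄a₆| · |1 − w a₂a₃a₅a₆| = |1 + w a₁a₂a₃| · |1 + w a₁a₅a₆| · |1 + w a₂a₄a₆| · |1 + w a₃a₄a₅|. (This expresses that the real part of z(∂U/∂z) vanishes at z = w.) -/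
open Complex

theorem stmt5 (a1 a2 a3 a4 a5 a6 : ℂ)
    (h1 : a1 ≠ 0) (h2 : a2 ≠ 0) (h3 : a3 ≠ 0)
    (h4 : a4 ≠ 0) (h5 : a5 ≠ 0) (h6 : a6 ≠ 0)
    (w : ℂ)
    (hw : q2 a1 a2 a3 a4 a5 a6 * w^2 + q1 a1 a2 a3 a4 a5 a6 * w
        + q0 a1 a2 a3 a4 a5 a6 = 0) :
    ‖1 - w‖ * ‖1 - w*a1*a2*a4*a5‖
      * ‖1 - w*a1*a3*a4*a6‖ * ‖1 - w*a2*a3*a5*a6‖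
    = ‖1 + w*a1*a2*a3‖ * ‖1 + w*a1*a5*a6‖
      * ‖1 + w*a2*a4*a6‖ * ‖1 + w*a3*a4*a5‖ := by
  have key : (1 - w) * (1 - w*a1*a2*a4*a5) * (1 - w*a1*a3*a4*a6) * (1 - w*a2*a3*a5*a6)
      = (1 + w*a1*a2*a3) * (1 + w*a1*a5*a6) * (1 + w*a2*a4*a6) * (1 + w*a3*a4*a5) := by
    unfold q0 q1 q2 at hw
    field_simp at hw
    have hA : a1 * a4 * (a2 * a5) * (a3 * a6) ≠ 0 := by
      simp [h1, h2, h3, h4, h5, h6]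
    apply mul_left_cancel₀ hA
    linear_combination (-w) * (a1 * a4 * (a2 * a5) * (a3 * a6)) * hw
  rw [← norm_mul, ← norm_mul, ← norm_mul, key, norm_mul, norm_mul, norm_mul]
end

section
/- Let V be a real vector space of finite dimension n+1 ≥ 2 equipped with a nondegenerate symmetric bilinear form B. Let u₁,…,u_{n+1} be a basis of V with Gram matrix G := (B(u_i,u_j))_{i,j=1}^{n+1}, and let c := (c_{ij}) be the cofactor matrix of G, i.e. c = (det G)·G⁻¹. Let ε ∈ {1, −1} and let v₁,…,v_{n+1} ∈ V satisfy B(u_i, v_j) = 0 for all i ≠ j and B(v_i, v_i) = ε for all i. Then for all i, j: (a) B(u_i, v_i)² · c_{ii} = ε · det G, and (b) (det G) · B(v_i, v_j) = B(u_i, v_i) · B(u_j, v_j) · c_{ij}. In particular, if ε = −1, det G < 0, and B(u_i, v_i) < 0 for all i, then c_{ii} > 0 and B(v_i, v_j) = −c_{ij}/√(c_{ii} c_{jj}) for all i, j. -/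
open Matrix in

theorem stmt7 {V : Type*} [AddCommGroup V] [Module ℝ V] [FiniteDimensional ℝ V]
    (n : ℕ) (hn : 1 ≤ n) (hdim : Module.finrank ℝ V = n + 1)
    (B : V →ₗ[ℝ] V →ₗ[ℝ] ℝ)
    (hsymm : ∀ x y : V, B x y = B y x)
    (hnd : ∀ x : V, (∀ y : V, B x y = 0) → x = 0)
    (u : Module.Basis (Fin (n + 1)) ℝ V)
    (G : Matrix (Fin (n + 1)) (Fin (n + 1)) ℝ)
    (hG : ∀ i j, G i j = B (u i) (u j))
    (c : Matrix (Fin (n + 1)) (Fin (n + 1)) ℝ)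
    (hc : c = G.det • G⁻¹)
    (ε : ℝ) (hε : ε = 1 ∨ ε = -1)
    (v : Fin (n + 1) → V)
    (horth : ∀ i j, i ≠ j → B (u i) (v j) = 0)
    (hnorm : ∀ i, B (v i) (v i) = ε) :
    (∀ i, (B (u i) (v i))^2 * c i i = ε * G.det) ∧
    (∀ i j, G.det * B (v i) (v j) = B (u i) (v i) * B (u j) (v j) * c i j) ∧
    (ε = -1 → G.det < 0 → (∀ i, B (u i) (v i) < 0) →
      (∀ i, 0 < c i i) ∧
      (∀ i j, B (v i) (v j) = -(c i j) / Real.sqrt (c i i * c j j))) := by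
  set d : Fin (n + 1) → ℝ := fun i => B (u i) (v i) with hd
  -- expansion of B (u i) w via coordinates
  have hexp : ∀ (i : Fin (n + 1)) (w : V), B (u i) w = G.mulVec (u.repr w) i := by
    intro i w
    conv_lhs => rw [← u.sum_repr w]
    rw [map_sum]
    simp only [_root_.map_smul, smul_eq_mul, Matrix.mulVec, dotProduct]
    exact Finset.sum_congr rfl fun k _ => by rw [hG]; ring
  -- G is invertible
  have hunit : IsUnit G := by
    rw [← Matrix.mulVec_injective_iff_isUnit]
    have hzero : ∀ x, G.mulVec x = 0 → x = 0 := by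
      intro x hx
      have hw : (∑ k, x k • u k) = 0 := by
        apply hnd
        intro y
        have h0 : ∀ i : Fin (n + 1), B (u i) (∑ k, x k • u k) = 0 := by
          intro i
          have := hexp i (∑ k, x k • u k)
          rwa [u.repr_sum_self, hx, Pi.zero_apply] at this
        have h0' : ∀ i : Fin (n + 1), B (∑ k, x k • u k) (u i) = 0 := by
          intro i; rw [hsymm]; exact h0 i
        conv_lhs => rw [← u.sum_repr y]
        rw [map_sum]
        simp only [_root_.map_smul, smul_eq_mul, h0', mul_zero, Finset.sum_const_zero]
      have h : (u.repr (∑ k, x k • u k) : Fin (n + 1) → ℝ) = (u.repr 0 : Fin (n + 1) → ℝ) := by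
        rw [hw]
      rw [u.repr_sum_self] at h
      simpa using h
    intro x y hxy
    have : G.mulVec (x - y) = 0 := by
      rw [Matrix.mulVec_sub, hxy, sub_self]
    have := hzero _ this
    exact sub_eq_zero.mp this
  have hdet : G.det ≠ 0 := by
    intro h
    exact (Matrix.isUnit_iff_isUnit_det G).mp hunit |>.ne_zero (by simpa using h)
  have hGinv : G⁻¹ * G = 1 := Matrix.nonsing_inv_mul G (Ne.isUnit hdet)
  -- coordinates of v j
  have hrepr : ∀ j, (u.repr (v j) : Fin (n + 1) → ℝ) = fun i => G⁻¹ i j * d j := by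
    intro j
    have h1 : G.mulVec (u.repr (v j)) = Pi.single j (d j) := by
      funext i
      rw [← hexp i (v j)]
      by_cases hij : i = j
      · subst hij; simp [hd]
      · rw [horth i j hij, Pi.single_apply, if_neg hij]
    have h2 : G⁻¹.mulVec (G.mulVec (u.repr (v j))) = G⁻¹.mulVec (Pi.single j (d j)) := by
      rw [h1]
    rw [Matrix.mulVec_mulVec, hGinv, Matrix.one_mulVec] at h2
    rw [h2, Matrix.mulVec_single]
    funext i
    simp [Matrix.col]
  -- symmetry of G⁻¹
  have hGsymm : Gᵀ = G := by
    funext i j; rw [Matrix.transpose_apply, hG, hG, hsymm]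
  have hGisymm : ∀ i j, G⁻¹ i j = G⁻¹ j i := by
    have hT : G⁻¹ᵀ = G⁻¹ := by rw [Matrix.transpose_nonsing_inv, hGsymm]
    intro i j
    have := congrFun (congrFun hT j) i
    simpa [Matrix.transpose_apply] using this
  -- key formula
  have hkey : ∀ i j, B (v i) (v j) = d i * d j * G⁻¹ i j := by
    intro i j
    have : B (v i) (v j) = ∑ k, (u.repr (v i)) k * B (u k) (v j) := by
      conv_lhs => rw [← u.sum_repr (v i)]
      rw [map_sum]
      simp [smul_eq_mul]
    rw [this]
    rw [Finset.sum_eq_single j]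
    · rw [hrepr i]
      simp only
      rw [hGisymm j i]
      ring
    · intro k _ hk
      rw [horth k j hk, mul_zero]
    · intro h; exact absurd (Finset.mem_univ j) h
  have hc' : ∀ i j, c i j = G.det * G⁻¹ i j := by
    intro i j; rw [hc]; simp
  -- part b
  have hb : ∀ i j, G.det * B (v i) (v j) = d i * d j * c i j := by
    intro i j
    rw [hkey, hc']
    ring
  -- part a
  have ha : ∀ i, (d i)^2 * c i i = ε * G.det := by
    intro i
    have := hb i i
    rw [hnorm i] at this
    nlinarith [this]
  refine ⟨ha, hb, ?_⟩
  intro hε1 hdetneg hdneg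
  have hcpos : ∀ i, 0 < c i i := by
    intro i
    have hai := ha i
    rw [hε1] at hai
    have hdi := hdneg i
    nlinarith [sq_nonneg (d i), sq_nonneg (d i * c i i)]
  refine ⟨hcpos, ?_⟩
  intro i j
  have hdi := hdneg i
  have hdj := hdneg j
  have hai := ha i
  have haj := ha j
  rw [hε1] at hai haj
  -- c i i = -det G / d i ^ 2
  have hcii : c i i = -G.det / (d i)^2 := by
    rw [eq_div_iff (pow_ne_zero _ (ne_of_lt hdi))]
    nlinarith [hai]
  have hcjj : c j j = -G.det / (d j)^2 := by
    rw [eq_div_iff (pow_ne_zero _ (ne_of_lt hdj))]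
    nlinarith [haj]
  have hsq : c i i * c j j = (G.det / (d i * d j))^2 := by
    rw [hcii, hcjj]
    field_simp
  have hsqrt : Real.sqrt (c i i * c j j) = -(G.det / (d i * d j)) := by
    rw [hsq, Real.sqrt_sq_eq_abs, abs_of_neg]
    exact div_neg_of_neg_of_pos hdetneg (mul_pos_of_neg_of_neg hdi hdj)
  rw [hsqrt]
  have hBij := hb i j
  have hdd : d i * d j > 0 := mul_pos_of_neg_of_neg hdi hdj
  field_simp
  nlinarith [hBij]
end

section
/- Let ρ > 0 be a real number and set a₁ = a₂ = a₃ = a₄ = a₅ = a₆ := −e^{ρ}. Then q₂ ≠ 0 and the two roots (with multiplicity) of the quadratic q₂ z² + q₁ z + q₀ are exactly z_± := (3(cosh ρ + 1) ± √−1·√((cosh ρ − 1)(3 cosh ρ + 1))) / (2 e^{4ρ} (2 cosh ρ − sinh ρ + 1)). -/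
open Complex

theorem stmt10 (ρ : ℝ) (hρ : 0 < ρ)
    (a : ℂ) (ha : a = -Real.exp ρ)
    (zm zp : ℂ)
    (hzm : zm = ((3 * (Real.cosh ρ + 1) : ℝ) -
        I * (Real.sqrt ((Real.cosh ρ - 1) * (3 * Real.cosh ρ + 1)) : ℝ)) /
        ((2 * Real.exp (4*ρ) * (2 * Real.cosh ρ - Real.sinh ρ + 1) : ℝ) : ℂ))
    (hzp : zp = ((3 * (Real.cosh ρ + 1) : ℝ) +
        I * (Real.sqrt ((Real.cosh ρ - 1) * (3 * Real.cosh ρ + 1)) : ℝ)) /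
        ((2 * Real.exp (4*ρ) * (2 * Real.cosh ρ - Real.sinh ρ + 1) : ℝ) : ℂ)) :
    q2 a a a a a a ≠ 0 ∧
    ∀ z : ℂ, q2 a a a a a a * z^2 + q1 a a a a a a * z + q0 a a a a a a
      = q2 a a a a a a * (z - zm) * (z - zp) := by
  have he1 : 1 < Real.exp ρ := Real.one_lt_exp_iff.2 hρ
  have he0 : (0:ℝ) < Real.exp ρ := Real.exp_pos ρ
  have hc1 : 1 ≤ Real.cosh ρ := Real.one_le_cosh ρ
  set e : ℝ := Real.exp ρ with he
  set E : ℂ := (e : ℂ) with hE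
  set R : ℂ := ((Real.sqrt ((Real.cosh ρ - 1) * (3 * Real.cosh ρ + 1)) : ℝ) : ℂ) with hR
  have hE0 : E ≠ 0 := by rw [hE]; exact_mod_cast ne_of_gt he0
  have hQpos : (0:ℝ) < e^2 + 2*e + 3 := by positivity
  have hQ0 : (E^2 + 2*E + 3) ≠ 0 := by rw [hE]; exact_mod_cast ne_of_gt hQpos
  -- exp(4ρ) = e^4
  have h4 : Real.exp (4*ρ) = e^4 := by
    rw [show (4:ℝ)*ρ = ρ+ρ+ρ+ρ by ring, Real.exp_add, Real.exp_add, Real.exp_add]; rw [he]; ring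
  -- cosh in terms of e
  have hcE : (Real.cosh ρ : ℂ) * (2*E) = E^2 + 1 := by
    have h : Real.cosh ρ * (2*e) = e^2 + 1 := by
      rw [Real.cosh_eq, Real.exp_neg, he]; field_simp
    rw [hE]; exact_mod_cast h
  -- denominator in terms of e
  have hDe : ((2 * Real.exp (4*ρ) * (2 * Real.cosh ρ - Real.sinh ρ + 1) : ℝ) : ℂ)
      = E^3 * (E^2 + 2*E + 3) := by
    have h : 2 * Real.exp (4*ρ) * (2 * Real.cosh ρ - Real.sinh ρ + 1)
        = e^3 * (e^2 + 2*e + 3) := by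
      rw [Real.cosh_eq, Real.sinh_eq, Real.exp_neg, h4, he]
      field_simp
      ring
    rw [hE]; exact_mod_cast h
  -- numerator real part in terms of e
  have hXe : ((3 * (Real.cosh ρ + 1) : ℝ) : ℂ) = 3*(E+1)^2 / (2*E) := by
    have h : 3 * (Real.cosh ρ + 1) * (2*e) = 3*(e+1)^2 := by
      rw [Real.cosh_eq, Real.exp_neg, he]; field_simp; ring
    rw [eq_div_iff (by simp [hE0]), hE]; exact_mod_cast h
  -- sqrt squared
  have hr2 : R^2 = ((Real.cosh ρ : ℂ) - 1) * (3 * (Real.cosh ρ : ℂ) + 1) := by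
    have hnn : (0:ℝ) ≤ (Real.cosh ρ - 1) * (3 * Real.cosh ρ + 1) := by nlinarith
    have h := Real.sq_sqrt hnn
    rw [hR]; exact_mod_cast h
  have hr2E : 4*E^2*R^2 = (E-1)^2 * (3*E^2 + 2*E + 3) := by
    linear_combination 4*E^2*hr2
      + (6*E*(Real.cosh ρ : ℂ) + 3*E^2 - 4*E + 3) * hcE
  -- division-free forms of zm and zp
  have hzm2 : 2*E^4*(E^2+2*E+3) * zm = 3*(E+1)^2 - 2*E*I*R := by
    rw [hzm, hDe, hXe, mul_div_assoc', div_eq_iff (mul_ne_zero (pow_ne_zero _ hE0) hQ0)]; field_simp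
  have hzp2 : 2*E^4*(E^2+2*E+3) * zp = 3*(E+1)^2 + 2*E*I*R := by
    rw [hzp, hDe, hXe, mul_div_assoc', div_eq_iff (mul_ne_zero (pow_ne_zero _ hE0) hQ0)]; field_simp
  -- values of q0, q1, q2
  have hq2E : q2 a a a a a a = E^8*(E-1)^2*(E^2+2*E+3) := by
    rw [q2, ha]; ring
  have hq1E : q1 a a a a a a = -(3*E^4*(E^2-1)^2) := by
    rw [q1, ha]; field_simp [hE0]; ring
  have hq0E : q0 a a a a a a = (E-1)^2*(3*E^2+2*E+1) := by
    rw [q0, ha]; ring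
  have hq2 : q2 a a a a a a ≠ 0 := by
    rw [hq2E]
    refine mul_ne_zero (mul_ne_zero (pow_ne_zero _ hE0) (pow_ne_zero _ ?_)) hQ0
    rw [hE]
    intro h
    have : e - 1 = 0 := by exact_mod_cast h
    linarith
  refine ⟨hq2, ?_⟩
  have hsum : q2 a a a a a a * (zm + zp) = 3*E^4*(E^2-1)^2 := by
    rw [hq2E]
    linear_combination (E^4*(E-1)^2/2) * hzm2 + (E^4*(E-1)^2/2) * hzp2
  have hprod : q2 a a a a a a * (zm * zp) = (E-1)^2*(3*E^2+2*E+1) := by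
    have h4Q : (4*(E^2+2*E+3)) ≠ 0 := by
      exact mul_ne_zero (by norm_num) hQ0
    refine mul_left_cancel₀ h4Q ?_
    rw [hq2E]
    linear_combination (E-1)^2*(2*E^4*(E^2+2*E+3)*zp) * hzm2
      + (E-1)^2*(3*(E+1)^2 - 2*E*I*R) * hzp2
      + (-(4*E^2*R^2*(E-1)^2)) * Complex.I_sq
      + (E-1)^2 * hr2E
  intro z
  rw [hq1E, hq0E]
  linear_combination z * hsum - hprod
end

section
/- Let ρ > 0 be a real number and let w := (3(cosh ρ + 1) + √−1·√((cosh ρ − 1)(3 cosh ρ + 1))) / (2 e^{4ρ} (2 cosh ρ − sinh ρ + 1)) (the root with positive imaginary part). Then the following three real identities hold, with D := √(3 e^{2ρ} + 2 e^{ρ} + 3): Im(1 − w)/Re(1 − w) = −D / (2 e^{5ρ} + 6 e^{4ρ} + 12 e^{3ρ} + 12 e^{2ρ} + 9 e^{ρ} + 3); Im(1 − e^{4ρ} w)/Re(1 − e^{4ρ} w) = D / (e^{ρ} + 3); Im(1 − e^{3ρ} w)/Re(1 − e^{3ρ} w) = −D / (2 e^{2ρ} + 3 e^{ρ} + 3).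 (These are the tangents of the arguments arg(1 − w), arg(1 − e^{4ρ} w), arg(1 − e^{3ρ} w) computed in the paper.) -/
open Complex

set_option maxHeartbeats 1000000 in
theorem stmt11 (ρ : ℝ) (hρ : 0 < ρ)
    (w : ℂ)
    (hw : w = ((3 * (Real.cosh ρ + 1) : ℝ) +
        I * (Real.sqrt ((Real.cosh ρ - 1) * (3 * Real.cosh ρ + 1)) : ℝ)) /
        ((2 * Real.exp (4*ρ) * (2 * Real.cosh ρ - Real.sinh ρ + 1) : ℝ) : ℂ))
    (D : ℝ)
    (hD : D = Real.sqrt (3 * Real.exp (2*ρ) + 2 * Real.exp ρ + 3)) :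
    (1 - w).im / (1 - w).re
      = -D / (2 * Real.exp (5*ρ) + 6 * Real.exp (4*ρ) + 12 * Real.exp (3*ρ)
          + 12 * Real.exp (2*ρ) + 9 * Real.exp ρ + 3) ∧
    (1 - (Real.exp (4*ρ) : ℂ) * w).im / (1 - (Real.exp (4*ρ) : ℂ) * w).re
      = D / (Real.exp ρ + 3) ∧
    (1 - (Real.exp (3*ρ) : ℂ) * w).im / (1 - (Real.exp (3*ρ) : ℂ) * w).re
      = -D / (2 * Real.exp (2*ρ) + 3 * Real.exp ρ + 3) := by
  set t := Real.exp ρ with htdef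
  have ht0 : 0 < t := Real.exp_pos ρ
  have ht1 : 1 < t := by
    rw [htdef]
    calc (1:ℝ) = Real.exp 0 := by simp
    _ < Real.exp ρ := Real.exp_lt_exp.mpr hρ
  have hcosh : Real.cosh ρ = (t + t⁻¹)/2 := by
    rw [Real.cosh_eq, Real.exp_neg]
  have hsinh : Real.sinh ρ = (t - t⁻¹)/2 := by
    rw [Real.sinh_eq, Real.exp_neg]
  have he2 : Real.exp (2*ρ) = t^2 := by rw [two_mul, Real.exp_add]; ring
  have he3 : Real.exp (3*ρ) = t^3 := by
    rw [show (3:ℝ)*ρ = ρ + 2*ρ by ring, Real.exp_add, he2]; ring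
  have he4 : Real.exp (4*ρ) = t^4 := by
    rw [show (4:ℝ)*ρ = 2*ρ + 2*ρ by ring, Real.exp_add, he2]; ring
  have he5 : Real.exp (5*ρ) = t^5 := by
    rw [show (5:ℝ)*ρ = ρ + 4*ρ by ring, Real.exp_add, he4]; ring
  have hD' : D = Real.sqrt (3*t^2 + 2*t + 3) := by rw [hD, he2]
  -- the square root simplifies
  have hB : Real.sqrt ((Real.cosh ρ - 1) * (3*Real.cosh ρ + 1))
      = (t-1)/(2*t) * D := by
    have h1 : (Real.cosh ρ - 1) * (3*Real.cosh ρ + 1)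
        = ((t-1)/(2*t))^2 * (3*t^2 + 2*t + 3) := by
      rw [hcosh]; field_simp; ring
    rw [h1, Real.sqrt_mul (sq_nonneg _), Real.sqrt_sq (div_nonneg (by linarith) (by linarith)), hD']
  -- denominator as a polynomial in t
  have hd : 2 * Real.exp (4*ρ) * (2 * Real.cosh ρ - Real.sinh ρ + 1)
      = t^3 * (t^2 + 2*t + 3) := by
    rw [he4, hcosh, hsinh]; field_simp; ring
  have hd0 : (t^3 * (t^2 + 2*t + 3)) ≠ 0 := by positivity
  -- real and imaginary parts of w
  have hwre : w.re = (3 * (Real.cosh ρ + 1)) / (t^3 * (t^2 + 2*t + 3)) := by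
    rw [hw, hd, div_ofReal_re]
    simp
  have hwim : w.im = ((t-1)/(2*t) * D) / (t^3 * (t^2 + 2*t + 3)) := by
    rw [hw, hd, div_ofReal_im, ← hB]
    simp
  have hA : (3 : ℝ) * (Real.cosh ρ + 1) = 3*(t+1)^2/(2*t) := by
    rw [hcosh]; field_simp; ring
  rw [hA] at hwre
  have t1 : t - 1 ≠ 0 := by linarith
  refine ⟨?_, ?_, ?_⟩
  · have hP : (0:ℝ) < 2*t^5 + 6*t^4 + 12*t^3 + 12*t^2 + 9*t + 3 := by positivity
    rw [he2, he3, he4, he5]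
    simp only [Complex.sub_im, Complex.sub_re, Complex.one_im, Complex.one_re,
      hwre, hwim]
    rw [div_eq_div_iff (by
      have : (1:ℝ) - 3*(t+1)^2/(2*t) / (t^3*(t^2+2*t+3))
          = (2*t^4*(t^2+2*t+3) - 3*(t+1)^2) / (2*t^4*(t^2+2*t+3)) := by
        field_simp
      rw [this]
      have hnum : (0:ℝ) < 2*t^4*(t^2+2*t+3) - 3*(t+1)^2 := by nlinarith
      positivity) (by positivity)]
    field_simp
    ring
  · rw [he4]
    simp only [Complex.sub_im, Complex.sub_re, Complex.one_im, Complex.one_re,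
      Complex.mul_im, Complex.mul_re, Complex.ofReal_re, Complex.ofReal_im,
      hwre, hwim]
    rw [div_eq_div_iff (by
      have : (1:ℝ) - (t^4 * (3*(t+1)^2/(2*t) / (t^3*(t^2+2*t+3)))
            - 0 * ((t-1)/(2*t)*D/(t^3*(t^2+2*t+3))))
          = -(((t-1)*(t+3)) / (2*(t^2+2*t+3))) := by
        field_simp; ring
      rw [this]
      refine neg_ne_zero.mpr (ne_of_gt (div_pos ?_ (by positivity)))
      nlinarith) (by positivity)]
    field_simp
    ring
  · rw [he2, he3]
    simp only [Complex.sub_im, Complex.sub_re, Complex.one_im, Complex.one_re,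
      Complex.mul_im, Complex.mul_re, Complex.ofReal_re, Complex.ofReal_im,
      hwre, hwim]
    rw [div_eq_div_iff (by
      have : (1:ℝ) - (t^3 * (3*(t+1)^2/(2*t) / (t^3*(t^2+2*t+3)))
            - 0 * ((t-1)/(2*t)*D/(t^3*(t^2+2*t+3))))
          = ((t-1)*(2*t^2+3*t+3)) / (2*t*(t^2+2*t+3)) := by
        field_simp; ring
      rw [this]
      have : (0:ℝ) < 2*t^2+3*t+3 := by positivity
      positivity) (by positivity)]
    field_simp
    ring
end

section
/- For real ρ > 0 define w(ρ) := (3(cosh ρ + 1) + √−1·√((cosh ρ − 1)(3 cosh ρ + 1))) / (2 e^{4ρ} (2 cosh ρ − sinh ρ + 1)). Then Im w(ρ) > 0 for every ρ > 0 (so w(ρ) is never real), and w(ρ) tends to 1 as ρ tends to 0 from the right. -/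
open Complex Filter

theorem stmt13 (w : ℝ → ℂ)
    (hw : ∀ ρ : ℝ, w ρ = ((3 * (Real.cosh ρ + 1) : ℝ) +
        I * (Real.sqrt ((Real.cosh ρ - 1) * (3 * Real.cosh ρ + 1)) : ℝ)) /
        ((2 * Real.exp (4*ρ) * (2 * Real.cosh ρ - Real.sinh ρ + 1) : ℝ) : ℂ)) :
    (∀ ρ : ℝ, 0 < ρ → 0 < (w ρ).im) ∧
    Tendsto w (nhdsWithin 0 (Set.Ioi 0)) (nhds 1) := by
  have hden : ∀ ρ : ℝ, 0 < 2 * Real.exp (4*ρ) * (2 * Real.cosh ρ - Real.sinh ρ + 1) := by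
    intro ρ
    have h1 : Real.cosh ρ - Real.sinh ρ = Real.exp (-ρ) := Real.cosh_sub_sinh ρ
    have h2 : 0 < Real.exp (-ρ) := Real.exp_pos _
    have h3 : 0 < Real.cosh ρ := Real.cosh_pos ρ
    have h4 : 0 < Real.exp (4*ρ) := Real.exp_pos _
    nlinarith
  constructor
  · intro ρ hρ
    rw [hw ρ]
    have h1 : 1 < Real.cosh ρ := by
      rw [Real.one_lt_cosh]; exact ne_of_gt hρ
    have hb : 0 < Real.sqrt ((Real.cosh ρ - 1) * (3 * Real.cosh ρ + 1)) := by
      apply Real.sqrt_pos.2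
      nlinarith
    have hd := hden ρ
    rw [Complex.div_ofReal_im]
    simp only [Complex.add_im, Complex.ofReal_im, Complex.mul_im, Complex.I_re,
      Complex.ofReal_re, Complex.I_im, Complex.ofReal_im, zero_add]
    rw [zero_mul, one_mul, zero_add]
    positivity
  · have hwf : w = fun ρ : ℝ => (((3 * (Real.cosh ρ + 1) : ℝ) : ℂ) +
        I * ((Real.sqrt ((Real.cosh ρ - 1) * (3 * Real.cosh ρ + 1)) : ℝ) : ℂ)) /
        ((2 * Real.exp (4*ρ) * (2 * Real.cosh ρ - Real.sinh ρ + 1) : ℝ) : ℂ) :=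
      funext hw
    rw [hwf]
    have hc : ContinuousAt (fun ρ : ℝ => (((3 * (Real.cosh ρ + 1) : ℝ) : ℂ) +
        I * ((Real.sqrt ((Real.cosh ρ - 1) * (3 * Real.cosh ρ + 1)) : ℝ) : ℂ)) /
        ((2 * Real.exp (4*ρ) * (2 * Real.cosh ρ - Real.sinh ρ + 1) : ℝ) : ℂ)) 0 := by
      apply ContinuousAt.div
      · fun_prop
      · fun_prop
      · simp only [ne_eq, Complex.ofReal_eq_zero]
        exact ne_of_gt (hden 0)
    have hval : (fun ρ : ℝ => (((3 * (Real.cosh ρ + 1) : ℝ) : ℂ) +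
        I * ((Real.sqrt ((Real.cosh ρ - 1) * (3 * Real.cosh ρ + 1)) : ℝ) : ℂ)) /
        ((2 * Real.exp (4*ρ) * (2 * Real.cosh ρ - Real.sinh ρ + 1) : ℝ) : ℂ)) 0 = 1 := by
      simp [Real.cosh_zero, Real.sinh_zero]
      norm_num
    have h1 : ((((3 * (Real.cosh 0 + 1) : ℝ)) : ℂ) +
        I * ((Real.sqrt ((Real.cosh 0 - 1) * (3 * Real.cosh 0 + 1)) : ℝ) : ℂ)) /
        ((2 * Real.exp (4*(0:ℝ)) * (2 * Real.cosh 0 - Real.sinh 0 + 1) : ℝ) : ℂ) = 1 := by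
      norm_num [Real.cosh_zero, Real.sinh_zero]
    have := hc.tendsto
    rw [h1] at this
    exact this.mono_left nhdsWithin_le_nhds
end
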